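/- arXiv:2206.01977 — 2 statements merged into one kernel-verified Lean document; each statement's English description precedes it below -/
import Mathlib

section
/- Let Q ∈ ℝ^{m×m} be a cascade matrix with nonzero subdiagonal entries q_{j+1,j} ≠ 0 and zero entries below the subdiagonal, B = e_1, and D = diag(d_1,…,d_m) with d_i > 0. For each i there exists a strictly upper triangular matrix T̄_i ∈ ℝ^{m×m} (of the specified nilpotent banded form, with zero entries in columns 1 through ⌈i/2⌉ and in rows m−⌈i/2⌉ through m) satisfying the recursive generalized Sylvester equation (I_m − BB^⊤)(Q T̄_i − T̄_i Q + T̄_{i−1}(D − d_m I_m)) = 0 for all i = 1,…,σ̄, where T̄_0 := I_m. -/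
open Matrix

noncomputable def stepRow (m : ℕ) (Q S : Matrix (Fin m) (Fin m) ℝ)
    (prev : ℕ → Fin m → ℝ) : ℕ → Fin m → ℝ
  | 0 => fun _ => 0
  | (s+1) => fun k =>
    if h : s + 2 ≤ m then
      (- S ⟨m - 1 - s, by omega⟩ k
        - (∑ l : Fin m, if m - 1 - s ≤ (l : ℕ) then
            Q ⟨m - 1 - s, by omega⟩ l * prev (m - 1 - (l : ℕ)) k else 0)
        + ∑ l : Fin m, prev s l * Q l k) / Q ⟨m - 1 - s, by omega⟩ ⟨m - 2 - s, by omega⟩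
    else 0

noncomputable def rowsFun (m : ℕ) (Q S : Matrix (Fin m) (Fin m) ℝ) : ℕ → ℕ → Fin m → ℝ
  | 0 => fun _ _ => 0
  | (n+1) => fun t k =>
      if t < n then rowsFun m Q S n t k
      else if t = n then stepRow m Q S (rowsFun m Q S n) t k
      else 0

noncomputable def rowVal (m : ℕ) (Q S : Matrix (Fin m) (Fin m) ℝ) (t : ℕ) : Fin m → ℝ :=
  rowsFun m Q S (t+1) t

noncomputable def solveM (m : ℕ) (Q S : Matrix (Fin m) (Fin m) ℝ) : Matrix (Fin m) (Fin m) ℝ :=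
  Matrix.of fun r k => rowVal m Q S (m - 1 - (r : ℕ)) k

lemma rowsFun_eq (m : ℕ) (Q S : Matrix (Fin m) (Fin m) ℝ) :
    ∀ n t, t < n → ∀ k, rowsFun m Q S n t k = rowVal m Q S t k := by
  intro n
  induction n with
  | zero => omega
  | succ n ih =>
    intro t ht k
    by_cases h : t < n
    · rw [show rowsFun m Q S (n+1) t k = rowsFun m Q S n t k by simp [rowsFun, h]]
      exact ih t h k
    · have ht' : t = n := by omega
      subst ht'
      simp [rowVal, rowsFun]

lemma rowVal_zero (m : ℕ) (Q S : Matrix (Fin m) (Fin m) ℝ) (k : Fin m) :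
    rowVal m Q S 0 k = 0 := by
  simp [rowVal, rowsFun, stepRow]

lemma rowVal_succ_neg (m : ℕ) (Q S : Matrix (Fin m) (Fin m) ℝ) (s : ℕ) (h : ¬ s + 2 ≤ m)
    (k : Fin m) : rowVal m Q S (s+1) k = 0 := by
  have h0 : rowVal m Q S (s+1) k = stepRow m Q S (rowsFun m Q S (s+1)) (s+1) k := by
    simp [rowVal, rowsFun]
  rw [h0]
  simp only [stepRow, dif_neg h]

lemma rowVal_succ_pos (m : ℕ) (Q S : Matrix (Fin m) (Fin m) ℝ) (s : ℕ) (h : s + 2 ≤ m)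
    (k : Fin m) :
    rowVal m Q S (s+1) k =
      (- S ⟨m - 1 - s, by omega⟩ k
        - (∑ l : Fin m, if m - 1 - s ≤ (l : ℕ) then
            Q ⟨m - 1 - s, by omega⟩ l * rowVal m Q S (m - 1 - (l : ℕ)) k else 0)
        + ∑ l : Fin m, rowVal m Q S s l * Q l k) / Q ⟨m - 1 - s, by omega⟩ ⟨m - 2 - s, by omega⟩ := by
  have h0 : rowVal m Q S (s+1) k = stepRow m Q S (rowsFun m Q S (s+1)) (s+1) k := by
    simp [rowVal, rowsFun]
  rw [h0]
  simp only [stepRow, dif_pos h]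
  have eB : ∀ (p : m - 1 - s < m),
      (∑ l : Fin m, if m - 1 - s ≤ (l : ℕ) then
          Q ⟨m - 1 - s, p⟩ l * rowsFun m Q S (s+1) (m - 1 - (l : ℕ)) k else 0)
        = ∑ l : Fin m, if m - 1 - s ≤ (l : ℕ) then
            Q ⟨m - 1 - s, p⟩ l * rowVal m Q S (m - 1 - (l : ℕ)) k else 0 := by
    intro p
    refine Finset.sum_congr rfl (fun l _ => ?_)
    split_ifs with hl
    · rw [rowsFun_eq m Q S (s+1) (m - 1 - (l : ℕ)) (by omega) k]
    · rfl
  have eC : (∑ l : Fin m, rowsFun m Q S (s+1) s l * Q l k)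
      = ∑ l : Fin m, rowVal m Q S s l * Q l k := by
    refine Finset.sum_congr rfl (fun l _ => ?_)
    rw [rowsFun_eq m Q S (s+1) s (by omega) l]
  rw [eB, eC]

lemma band_rowVal (m : ℕ) (Q S : Matrix (Fin m) (Fin m) ℝ)
    (hcasc : ∀ i j : Fin m, (j : ℕ) + 1 < (i : ℕ) → Q i j = 0) (c : ℕ)
    (hS : ∀ (r k : Fin m), ¬((r : ℕ) + c + 2 ≤ m ∧ (r : ℕ) + c ≤ (k : ℕ)) → S r k = 0) :
    ∀ t (k : Fin m), ¬(c + 2 ≤ t ∧ m + c - t ≤ (k : ℕ)) → rowVal m Q S t k = 0 := by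
  intro t
  induction t using Nat.strong_induction_on with
  | _ t ih =>
    cases t with
    | zero => intro k _; exact rowVal_zero m Q S k
    | succ s =>
      intro k hk
      by_cases h : s + 2 ≤ m
      · rw [rowVal_succ_pos m Q S s h k]
        have hkm : (k : ℕ) < m := k.isLt
        have hS0 : ∀ (p : m - 1 - s < m), S ⟨m - 1 - s, p⟩ k = 0 := by
          intro p
          exact hS _ _ (by simp only [not_and, not_le] at hk ⊢; omega)
        have hB : ∀ (p : m - 1 - s < m),
            (∑ l : Fin m, if m - 1 - s ≤ (l : ℕ) then
              Q ⟨m - 1 - s, p⟩ l * rowVal m Q S (m - 1 - (l : ℕ)) k else 0) = 0 := by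
          intro p
          refine Finset.sum_eq_zero (fun l _ => ?_)
          split_ifs with hl
          · rw [ih (m - 1 - (l : ℕ)) (by omega) k
              (by simp only [not_and, not_le] at hk ⊢; omega), mul_zero]
          · rfl
        have hC : (∑ l : Fin m, rowVal m Q S s l * Q l k) = 0 := by
          refine Finset.sum_eq_zero (fun l _ => ?_)
          by_cases hl : c + 2 ≤ s ∧ m + c - s ≤ (l : ℕ)
          · rw [hcasc l k (by simp only [not_and, not_le] at hk; omega), mul_zero]
          · rw [ih s (by omega) l hl, zero_mul]
        rw [hS0, hB, hC]
        simp
      · exact rowVal_succ_neg m Q S s h k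

lemma band_solveM (m : ℕ) (Q S : Matrix (Fin m) (Fin m) ℝ)
    (hcasc : ∀ i j : Fin m, (j : ℕ) + 1 < (i : ℕ) → Q i j = 0) (c : ℕ)
    (hS : ∀ (r k : Fin m), ¬((r : ℕ) + c + 2 ≤ m ∧ (r : ℕ) + c ≤ (k : ℕ)) → S r k = 0) :
    ∀ (r k : Fin m), ¬((r : ℕ) + c + 3 ≤ m ∧ (r : ℕ) + c + 1 ≤ (k : ℕ)) →
      solveM m Q S r k = 0 := by
  intro r k hr
  have hrm : (r : ℕ) < m := r.isLt
  have hkm : (k : ℕ) < m := k.isLt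
  exact band_rowVal m Q S hcasc c hS (m - 1 - (r : ℕ)) k
    (by simp only [not_and, not_le] at hr ⊢; omega)

lemma solve_entry (m : ℕ) (Q S : Matrix (Fin m) (Fin m) ℝ)
    (hcasc : ∀ i j : Fin m, (j : ℕ) + 1 < (i : ℕ) → Q i j = 0)
    (hsub : ∀ j : Fin m, ∀ h : (j : ℕ) + 1 < m, Q ⟨(j : ℕ) + 1, h⟩ j ≠ 0)
    (j k : Fin m) (hj : 1 ≤ (j : ℕ)) :
    (Q * solveM m Q S - solveM m Q S * Q + S) j k = 0 := by
  have hjm : (j : ℕ) < m := j.isLt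
  set T := solveM m Q S with hT
  have hTval : ∀ (l : Fin m) (k' : Fin m), T l k' = rowVal m Q S (m - 1 - (l : ℕ)) k' :=
    fun l k' => rfl
  -- the previous-row index
  set s : ℕ := m - 1 - (j : ℕ) with hs
  have hs2 : s + 2 ≤ m := by omega
  have hms : m - 1 - s = (j : ℕ) := by omega
  -- q := subdiagonal entry
  set j1 : Fin m := ⟨(j : ℕ) - 1, by omega⟩ with hj1
  have hq : Q j j1 ≠ 0 := by
    have h1 : ((j1 : ℕ)) + 1 < m := by simp [hj1]; omega
    have := hsub j1 h1
    have e : (⟨(j1 : ℕ) + 1, h1⟩ : Fin m) = j := by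
      apply Fin.ext; simp [hj1]; omega
    rwa [e] at this
  -- unfold the defining formula for row j-1
  have key := rowVal_succ_pos m Q S s hs2 k
  have e1 : ∀ (p : m - 1 - s < m), (⟨m - 1 - s, p⟩ : Fin m) = j := by
    intro p; apply Fin.ext; simp [hms]
  have e2 : ∀ (p : m - 2 - s < m), (⟨m - 2 - s, p⟩ : Fin m) = j1 := by
    intro p; apply Fin.ext; simp [hj1]; omega
  rw [e1, e2] at key
  have hrow : rowVal m Q S (s + 1) k = T j1 k := by
    rw [hTval j1 k]
    congr 1
    simp [hj1]; omega
  have hrows : ∀ l : Fin m, rowVal m Q S s l = T j l := by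
    intro l; rw [hTval j l]
  rw [hrow] at key
  simp only [hms, hrows] at key
  rw [eq_div_iff hq] at key
  -- split the Q*T sum
  have split : (∑ l : Fin m, Q j l * T l k)
      = (∑ l : Fin m, if (j : ℕ) ≤ (l : ℕ) then Q j l * rowVal m Q S (m - 1 - (l : ℕ)) k else 0)
        + Q j j1 * T j1 k := by
    have step : ∀ l : Fin m, Q j l * T l k
        = (if (j : ℕ) ≤ (l : ℕ) then Q j l * rowVal m Q S (m - 1 - (l : ℕ)) k else 0)
          + (if l = j1 then Q j l * T l k else 0) := by
      intro l
      by_cases h1 : (j : ℕ) ≤ (l : ℕ)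
      · rw [if_pos h1, if_neg (by intro hlj; rw [hlj] at h1; simp [hj1] at h1; omega)]
        rw [hTval l k, add_zero]
      · rw [if_neg h1]
        by_cases h2 : l = j1
        · rw [if_pos h2, zero_add]
        · rw [if_neg h2, hcasc j l (by
            have : (l : ℕ) ≠ (j : ℕ) - 1 := fun hc => h2 (Fin.ext (by simp [hj1, hc]))
            omega), zero_mul, add_zero]
    rw [Finset.sum_congr rfl (fun l _ => step l), Finset.sum_add_distrib]
    congr 1
    rw [Finset.sum_ite_eq' Finset.univ j1 (fun l => Q j l * T l k)]
    simp
  rw [Matrix.add_apply, Matrix.sub_apply, Matrix.mul_apply, Matrix.mul_apply, split]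
  have hrow2 : T j1 k = rowVal m Q S (s + 1) k := hrow.symm
  nlinarith [key, hrow2]

lemma proj_mul_zero (m : ℕ) (hm : 2 ≤ m) (B : Fin m → ℝ)
    (hB : B = Pi.single ⟨0, by omega⟩ 1) (E : Matrix (Fin m) (Fin m) ℝ)
    (hE : ∀ j : Fin m, 1 ≤ (j : ℕ) → ∀ k : Fin m, E j k = 0) :
    (1 - Matrix.vecMulVec B B) * E = 0 := by
  ext j k
  rw [Matrix.mul_apply, Matrix.zero_apply]
  set i0 : Fin m := ⟨0, by omega⟩ with hi0
  have hBval : ∀ l : Fin m, B l = if l = i0 then 1 else 0 := by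
    intro l; rw [hB, Pi.single_apply]
  by_cases hj : j = i0
  · refine Finset.sum_eq_zero (fun l _ => ?_)
    rw [Matrix.sub_apply, Matrix.one_apply, vecMulVec_apply, hBval, hBval, hj]
    by_cases hl : l = i0
    · simp [hl]
    · simp [hl, Ne.symm hl]
  · have : ∀ l : Fin m, ((1 : Matrix (Fin m) (Fin m) ℝ) - Matrix.vecMulVec B B) j l * E l k
        = if l = j then E l k else 0 := by
      intro l
      rw [Matrix.sub_apply, Matrix.one_apply, vecMulVec_apply, hBval, hBval,
        if_neg hj]
      by_cases hl : l = j
      · simp [hl, eq_comm]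
      · rw [if_neg hl, if_neg (fun h : j = l => hl h.symm)]; ring
    rw [Finset.sum_congr rfl (fun l _ => this l),
      Finset.sum_ite_eq' Finset.univ j (fun l => E l k)]
    have hj1 : 1 ≤ (j : ℕ) := by
      rcases Nat.eq_zero_or_pos (j : ℕ) with h0 | h1
      · exact absurd (Fin.ext (by simp [hi0, h0])) hj
      · exact h1
    simp [hE j hj1 k]

/-- existence of the banded nilpotent matrices `T̄_i` solving the
recursive generalized Sylvester equations
`(I - BBᵀ)(Q T̄_i - T̄_i Q + T̄_{i-1}(D - d_m I)) = 0`. -/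
theorem stmt1 (m : ℕ) (hm : 2 ≤ m) (σbar : ℕ) (hσ : 1 ≤ σbar)
    (Q : Matrix (Fin m) (Fin m) ℝ)
    (hcasc : ∀ i j : Fin m, (j : ℕ) + 1 < (i : ℕ) → Q i j = 0)
    (hsub : ∀ j : Fin m, ∀ h : (j : ℕ) + 1 < m, Q ⟨(j : ℕ) + 1, h⟩ j ≠ 0)
    (d : Fin m → ℝ) (hd : ∀ i, 0 < d i)
    (B : Fin m → ℝ) (hB : B = Pi.single ⟨0, by omega⟩ 1) :
    ∃ Tbar : ℕ → Matrix (Fin m) (Fin m) ℝ,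
      Tbar 0 = 1 ∧
      (∀ i, 1 ≤ i → i ≤ σbar → ∀ j k : Fin m,
        ¬((j : ℕ) + 1 ≤ m - 1 - (i + 1) / 2 ∧ (j : ℕ) + (i + 1) / 2 ≤ (k : ℕ)) →
        Tbar i j k = 0) ∧
      (∀ i, 1 ≤ i → i ≤ σbar →
        (1 - Matrix.vecMulVec B B) *
          (Q * Tbar i - Tbar i * Q +
            Tbar (i - 1) * (Matrix.diagonal d - d ⟨m - 1, by omega⟩ • 1)) = 0) := by
  classical
  have hm1 : m - 1 < m := by omega
  set dm : ℝ := d ⟨m - 1, hm1⟩ with hdm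
  set Δ : Matrix (Fin m) (Fin m) ℝ := Matrix.diagonal d - dm • 1 with hΔdef
  have Δapp : ∀ l k : Fin m, Δ l k = if l = k then d k - dm else 0 := by
    intro l k
    rw [hΔdef, Matrix.sub_apply, Matrix.smul_apply, Matrix.one_apply, Matrix.diagonal_apply]
    by_cases h : l = k
    · subst h; simp
    · simp [h]
  have mulΔ : ∀ (T : Matrix (Fin m) (Fin m) ℝ) (r k : Fin m),
      (T * Δ) r k = T r k * (d k - dm) := by
    intro T r k
    rw [Matrix.mul_apply]
    rw [Finset.sum_eq_single k (fun l _ hl => by rw [Δapp, if_neg hl, mul_zero])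
      (fun h => absurd (Finset.mem_univ k) h)]
    rw [Δapp, if_pos rfl]
  let Tb : ℕ → Matrix (Fin m) (Fin m) ℝ :=
    fun i => Nat.rec (1 : Matrix (Fin m) (Fin m) ℝ) (fun _ T => solveM m Q (T * Δ)) i
  have hband : ∀ i, ∀ r k : Fin m,
      ¬((r : ℕ) + i + 3 ≤ m ∧ (r : ℕ) + i + 1 ≤ (k : ℕ)) → Tb (i + 1) r k = 0 := by
    intro i
    induction i with
    | zero =>
      intro r k hrk
      refine band_solveM m Q (Tb 0 * Δ) hcasc 0 ?_ r k (by simpa using hrk)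
      intro r' k' hr'
      have hr'm : (r' : ℕ) < m := r'.isLt
      rw [show Tb 0 * Δ = Δ from one_mul Δ, Δapp]
      split_ifs with h
      · have hk' : k' = (⟨m - 1, hm1⟩ : Fin m) := by
          apply Fin.ext
          show (k' : ℕ) = m - 1
          have : (r' : ℕ) = (k' : ℕ) := by rw [h]
          simp only [not_and, not_le] at hr'
          omega
        rw [hk']
        exact sub_self dm
      · rfl
    | succ i ih =>
      intro r k hrk
      refine band_solveM m Q (Tb (i + 1) * Δ) hcasc (i + 1) ?_ r k (by
        simp only [not_and, not_le] at hrk ⊢; omega)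
      intro r' k' hr'
      rw [mulΔ, ih r' k' (by simp only [not_and, not_le] at hr' ⊢; omega), zero_mul]
  refine ⟨Tb, rfl, ?_, ?_⟩
  · intro i h1 _ j k hcond
    cases i with
    | zero => omega
    | succ i' =>
      refine hband i' j k (fun hcon => hcond ?_)
      have hjm : (j : ℕ) < m := j.isLt
      have hkm : (k : ℕ) < m := k.isLt
      constructor <;> omega
  · intro i h1 _
    cases i with
    | zero => omega
    | succ i' =>
      have key : ∀ j : Fin m, 1 ≤ (j : ℕ) → ∀ k : Fin m,
          (Q * solveM m Q (Tb i' * Δ) - solveM m Q (Tb i' * Δ) * Q + Tb i' * Δ) j k = 0 :=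
        fun j hj k => solve_entry m Q (Tb i' * Δ) hcasc hsub j k hj
      exact proj_mul_zero m hm B hB _ key
end

section
/- Let Q ∈ ℝ^{m×m} and B ∈ ℝ^m with (Q,B) controllable. Then for every q > 0 there exist a symmetric positive definite P ∈ ℝ^{m×m} and a row vector K_Q ∈ ℝ^{1×m} such that Sym(P(Q + B K_Q)) + qP ≺ 0. -/
/-!
Shift `Q` to `A = Q + r • 1` with `r > ∑ |Q i k|`, so that `A + Aᵀ ≻ 0`. For symmetric `M` and an
eigenpair `M v = μ v`, one has `vᵀ (A M + M Aᵀ) v = μ vᵀ (A + Aᵀ) v`; hence `M ↦ A M + M Aᵀ` is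
injective, so bijective, on symmetric matrices, and its preimage `W` of `B Bᵀ` is positive
semidefinite. The kernel of `W` is `Qᵀ`-invariant and orthogonal to `B`, so controllability makes
`W` positive definite. For `P = W⁻¹` and `K = -½ P B` the congruence `P (A W + W Aᵀ) P` gives
`P A + Aᵀ P = (P B)(P B)ᵀ`, the feedback term cancels the right-hand side, and
`Sym(P (Q + B K)) + q P = (q - r) P ≺ 0` once `r > q`.
-/

open Matrix

namespace Matrix

lemma IsHermitian.transpose_eq {n α : Type*} [Star α] [TrivialStar α] {M : Matrix n n α}
    (hM : M.IsHermitian) : Mᵀ = M := by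
  rwa [IsHermitian, conjTranspose_eq_transpose_of_trivial] at hM

def controllabilityMatrix {K : Type*} [CommSemiring K] {m : ℕ} (Q : Matrix (Fin m) (Fin m) K)
    (b : Fin m → K) : Matrix (Fin m) (Fin m) K :=
  of fun i j : Fin m => (Q ^ (j : ℕ) *ᵥ b) i

variable {n : Type*} [Fintype n]

lemma mulVec_injective_of_rank_eq_card {K : Type*} [Field K] {A : Matrix n n K}
    (h : A.rank = Fintype.card n) : Function.Injective A.mulVec := by
  have : LinearMap.range A.mulVecLin = ⊤ :=
    Submodule.eq_top_of_finrank_eq (by rw [Module.finrank_fintype_fun_eq_card]; exact h)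
  exact LinearMap.injective_iff_surjective.mpr (LinearMap.range_eq_top.mp this)

lemma eq_zero_of_forall_dotProduct_pow_mulVec_eq_zero {K : Type*} [Field K] {m : ℕ}
    {Q : Matrix (Fin m) (Fin m) K} {b : Fin m → K} (hctrb : (controllabilityMatrix Q b).rank = m)
    {u : Fin m → K} (hu : ∀ j : ℕ, b ⬝ᵥ (Qᵀ ^ j *ᵥ u) = 0) : u = 0 := by
  have hinj : Function.Injective (controllabilityMatrix Q b)ᵀ.mulVec :=
    mulVec_injective_of_rank_eq_card (by rw [rank_transpose, hctrb, Fintype.card_fin])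
  refine hinj ((funext fun j => ?_).trans (mulVec_zero _).symm)
  change ((controllabilityMatrix Q b)ᵀ *ᵥ u) j = 0
  rw [← hu j, ← transpose_pow, mulVec_transpose, mulVec_transpose, dotProduct_comm,
    ← dotProduct_mulVec]
  rfl

section CommRing

variable {R : Type*} [CommRing R]

lemma dotProduct_transpose_mulVec_self (A : Matrix n n R) (x : n → R) :
    x ⬝ᵥ (Aᵀ *ᵥ x) = x ⬝ᵥ (A *ᵥ x) := by
  rw [mulVec_transpose, dotProduct_comm, ← dotProduct_mulVec]

lemma dotProduct_mul_add_mul_transpose_mulVec_of_mulVec_eq_smul {A M : Matrix n n R}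
    (hM : Mᵀ = M) {μ : R} {v : n → R} (hv : M *ᵥ v = μ • v) :
    v ⬝ᵥ ((A * M + M * Aᵀ) *ᵥ v) = μ * (v ⬝ᵥ ((A + Aᵀ) *ᵥ v)) := by
  have hvM : v ᵥ* M = μ • v := by rw [← hM, vecMul_transpose, hv]
  simp only [add_mulVec, ← mulVec_mulVec, dotProduct_add, hv, mulVec_smul, dotProduct_smul,
    smul_eq_mul, mul_add]
  rw [dotProduct_mulVec v M, hvM, smul_dotProduct, smul_eq_mul]

variable [NoZeroDivisors R] {A M : Matrix n n R} {b u : n → R}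

lemma dotProduct_eq_zero_of_mul_add_mul_transpose_eq_vecMulVec (hM : Mᵀ = M)
    (h : A * M + M * Aᵀ = vecMulVec b b) (hu : M *ᵥ u = 0) : b ⬝ᵥ u = 0 := by
  have huM : u ᵥ* M = 0 := by rw [← hM, vecMul_transpose, hu]
  have hquad := congrArg (fun X => u ⬝ᵥ (X *ᵥ u)) h
  simp only [add_mulVec, ← mulVec_mulVec, hu, mulVec_zero, zero_add, dotProduct_mulVec u M, huM,
    zero_dotProduct, vecMulVec_mulVec, op_smul_eq_smul, dotProduct_smul, smul_eq_mul,
    dotProduct_comm u b] at hquad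
  exact mul_self_eq_zero.mp hquad.symm

lemma mulVec_transpose_mulVec_eq_zero_of_mul_add_mul_transpose_eq_vecMulVec (hM : Mᵀ = M)
    (h : A * M + M * Aᵀ = vecMulVec b b) (hu : M *ᵥ u = 0) : M *ᵥ (Aᵀ *ᵥ u) = 0 := by
  have hb := dotProduct_eq_zero_of_mul_add_mul_transpose_eq_vecMulVec hM h hu
  simpa only [add_mulVec, ← mulVec_mulVec, hu, mulVec_zero, zero_add, vecMulVec_mulVec, hb,
    MulOpposite.op_zero, zero_smul] using congrArg (· *ᵥ u) h

end CommRing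

lemma abs_dotProduct_mulVec_self_le (Q : Matrix n n ℝ) (x : n → ℝ) :
    |x ⬝ᵥ (Q *ᵥ x)| ≤ (∑ i, ∑ k, |Q i k|) * (x ⬝ᵥ x) := by
  have hsq (i : n) : x i * x i ≤ x ⬝ᵥ x :=
    Finset.single_le_sum (f := fun i => x i * x i) (fun i _ => mul_self_nonneg _)
      (Finset.mem_univ i)
  have hexpand : x ⬝ᵥ (Q *ᵥ x) = ∑ i, ∑ k, x i * (Q i k * x k) := by
    simp only [dotProduct, mulVec, Finset.mul_sum]
  rw [hexpand, Finset.sum_mul]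
  refine (Finset.abs_sum_le_sum_abs _ _).trans (Finset.sum_le_sum fun i _ => ?_)
  rw [Finset.sum_mul]
  refine (Finset.abs_sum_le_sum_abs _ _).trans (Finset.sum_le_sum fun k _ => ?_)
  have hprod : |x i * x k| ≤ x ⬝ᵥ x := by
    rw [abs_le]
    constructor <;> nlinarith [hsq i, hsq k, sq_nonneg (x i + x k), sq_nonneg (x i - x k)]
  calc |x i * (Q i k * x k)| = |Q i k| * |x i * x k| := by rw [abs_mul, abs_mul, abs_mul]; ring
    _ ≤ |Q i k| * (x ⬝ᵥ x) := mul_le_mul_of_nonneg_left hprod (abs_nonneg _)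

variable [DecidableEq n]

lemma IsHermitian.posSemidef_of_eigenvalue_nonneg {M : Matrix n n ℝ} (hM : M.IsHermitian)
    (h : ∀ (μ : ℝ) (v : n → ℝ), v ≠ 0 → M *ᵥ v = μ • v → 0 ≤ μ) : M.PosSemidef := by
  refine hM.posSemidef_iff_eigenvalues_nonneg.mpr fun i => ?_
  refine h _ _ ?_ (hM.mulVec_eigenvectorBasis i)
  simpa using hM.eigenvectorBasis.orthonormal.ne_zero i

lemma posDef_add_smul_one_add_transpose {Q : Matrix n n ℝ} {r : ℝ}
    (hr : ∑ i, ∑ k, |Q i k| < r) : (Q + r • 1 + (Q + r • 1)ᵀ).PosDef := by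
  refine PosDef.of_dotProduct_mulVec_pos ?_ fun x hx => ?_
  · simp [IsHermitian, add_comm]
  have hxx : 0 < x ⬝ᵥ x := by simpa using dotProduct_star_self_pos_iff.mpr hx
  have hQ := abs_le.mp (abs_dotProduct_mulVec_self_le Q x)
  rw [star_trivial, add_mulVec, dotProduct_add, dotProduct_transpose_mulVec_self]
  simp only [add_mulVec, smul_mulVec, one_mulVec, dotProduct_add, dotProduct_smul, smul_eq_mul]
  nlinarith

lemma posSemidef_of_posSemidef_mul_add_mul_transpose {A M : Matrix n n ℝ}
    (hA : (A + Aᵀ).PosDef) (hM : M.IsHermitian) (h : (A * M + M * Aᵀ).PosSemidef) :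
    M.PosSemidef := by
  refine hM.posSemidef_of_eigenvalue_nonneg fun μ v hv hμv => ?_
  have hquad := h.dotProduct_mulVec_nonneg v
  rw [star_trivial,
    dotProduct_mul_add_mul_transpose_mulVec_of_mulVec_eq_smul hM.transpose_eq hμv] at hquad
  have hpos := hA.dotProduct_mulVec_pos hv
  rw [star_trivial] at hpos
  exact nonneg_of_mul_nonneg_left hquad hpos

lemma exists_isHermitian_mul_add_mul_transpose_eq {A N : Matrix n n ℝ} (hA : (A + Aᵀ).PosDef)
    (hN : N.IsHermitian) : ∃ M : Matrix n n ℝ, M.IsHermitian ∧ A * M + M * Aᵀ = N := by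
  let S := selfAdjoint.submodule ℝ (Matrix n n ℝ)
  have hmem {M : Matrix n n ℝ} : M ∈ S ↔ M.IsHermitian := isHermitian_iff_isSelfAdjoint.symm
  let L := LinearMap.mulLeft ℝ A + LinearMap.mulRight ℝ Aᵀ
  have hL : ∀ M ∈ S, L M ∈ S := fun M hM => by
    rw [hmem] at hM ⊢
    simp [L, IsHermitian, hM.transpose_eq, add_comm]
  have hinj : Function.Injective (L.restrict hL) := by
    rw [← LinearMap.ker_eq_bot, LinearMap.ker_eq_bot']
    rintro ⟨M, hM⟩ hLM
    have hLM' : A * M + M * Aᵀ = 0 := congrArg Subtype.val hLM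
    have hM' := hmem.mp hM
    have hpos := posSemidef_of_posSemidef_mul_add_mul_transpose hA hM'
      (by simp [hLM', PosSemidef.zero])
    have hneg := posSemidef_of_posSemidef_mul_add_mul_transpose hA hM'.neg
      (by simp [← neg_add, hLM', PosSemidef.zero])
    open scoped MatrixOrder in
    exact Subtype.ext (le_antisymm (neg_nonneg.mp hneg.nonneg) hpos.nonneg)
  obtain ⟨⟨M, hM⟩, hLM⟩ := LinearMap.injective_iff_surjective.mp hinj ⟨N, hmem.mpr hN⟩
  exact ⟨M, hmem.mp hM, congrArg Subtype.val hLM⟩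

lemma PosSemidef.posDef_of_controllable {m : ℕ} {Q W : Matrix (Fin m) (Fin m) ℝ}
    {b : Fin m → ℝ} {r : ℝ} (hW : W.PosSemidef) (hctrb : (controllabilityMatrix Q b).rank = m)
    (h : (Q + r • 1) * W + W * (Q + r • 1)ᵀ = vecMulVec b b) : W.PosDef := by
  have hWt := hW.isHermitian.transpose_eq
  refine hW.posDef_iff_isUnit.mpr (mulVec_injective_iff_isUnit.mp ?_)
  refine (LinearMap.ker_eq_bot (f := W.mulVecLin)).mp
    (ker_mulVecLin_eq_bot_iff.mpr fun u hu => ?_)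
  have hker (j : ℕ) : W *ᵥ (Qᵀ ^ j *ᵥ u) = 0 := by
    induction j with
    | zero => simpa using hu
    | succ j ih =>
      have hshift :=
        mulVec_transpose_mulVec_eq_zero_of_mul_add_mul_transpose_eq_vecMulVec hWt h ih
      rw [transpose_add, transpose_smul, transpose_one, add_mulVec, smul_mulVec, one_mulVec,
        mulVec_add, mulVec_smul, ih, smul_zero, add_zero] at hshift
      rwa [pow_succ', ← mulVec_mulVec]
  exact eq_zero_of_forall_dotProduct_pow_mulVec_eq_zero hctrb fun j =>
    dotProduct_eq_zero_of_mul_add_mul_transpose_eq_vecMulVec hWt h (hker j)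

lemma inv_mul_add_transpose_mul_inv_eq {A W : Matrix n n ℝ} {b : n → ℝ} (hW : W.PosDef)
    (h : A * W + W * Aᵀ = vecMulVec b b) :
    W⁻¹ * A + Aᵀ * W⁻¹ = vecMulVec (W⁻¹ *ᵥ b) (W⁻¹ *ᵥ b) := by
  have hdet : IsUnit W.det := (isUnit_iff_isUnit_det W).mp hW.isUnit
  calc W⁻¹ * A + Aᵀ * W⁻¹ = W⁻¹ * (A * W + W * Aᵀ) * W⁻¹ := by
        simp only [Matrix.mul_add, Matrix.add_mul, Matrix.mul_assoc, mul_nonsing_inv W hdet,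
          ← Matrix.mul_assoc W⁻¹ W, nonsing_inv_mul W hdet, Matrix.one_mul, Matrix.mul_one]
    _ = vecMulVec (W⁻¹ *ᵥ b) (W⁻¹ *ᵥ b) := by
        rw [h, mul_vecMulVec, vecMulVec_mul, ← mulVec_transpose, hW.inv.isHermitian.transpose_eq]

lemma neg_sym_mul_closedLoop_add_smul_eq {Q P : Matrix n n ℝ} {b : n → ℝ} {r q : ℝ}
    (hP : Pᵀ = P) (h : P * (Q + r • 1) + (Q + r • 1)ᵀ * P = vecMulVec (P *ᵥ b) (P *ᵥ b)) :
    -((1 / 2 : ℝ) • (P * (Q + vecMulVec b (-(1 / 2 : ℝ) • (P *ᵥ b))) +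
      (P * (Q + vecMulVec b (-(1 / 2 : ℝ) • (P *ᵥ b))))ᵀ) + q • P) = (r - q) • P := by
  set H := vecMulVec (P *ᵥ b) (P *ᵥ b)
  have hclosed : P * (Q + vecMulVec b (-(1 / 2 : ℝ) • (P *ᵥ b))) = P * Q - (1 / 2 : ℝ) • H := by
    rw [Matrix.mul_add, vecMulVec_smul, Matrix.mul_smul, mul_vecMulVec]
    module
  have hsum : P * Q + Qᵀ * P = H - (2 * r) • P := by
    rw [← h]
    simp only [Matrix.mul_add, Matrix.add_mul, transpose_add, transpose_smul, transpose_one,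
      Matrix.mul_smul, Matrix.smul_mul, Matrix.mul_one, Matrix.one_mul]
    module
  rw [hclosed, transpose_sub, transpose_smul, transpose_mul, hP, transpose_vecMulVec]
  linear_combination (norm := module) (-(1 / 2 : ℝ)) • hsum

end Matrix

/-- controllability of `(Q, B)` implies, for every `q > 0`,
feasibility of the Lyapunov matrix inequality
`Sym(P(Q + B K_Q)) + qP ≺ 0` with `P ≻ 0`. -/
theorem stmt8 (m : ℕ) (Q : Matrix (Fin m) (Fin m) ℝ) (B : Fin m → ℝ)
    (hctrb : (Matrix.of fun i j : Fin m => ((Q ^ (j : ℕ)) *ᵥ B) i).rank = m)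
    (q : ℝ) (hq : 0 < q) :
    ∃ (P : Matrix (Fin m) (Fin m) ℝ) (K : Fin m → ℝ), P.PosDef ∧
      (-(((1 : ℝ) / 2) • (P * (Q + Matrix.vecMulVec B K) +
          (P * (Q + Matrix.vecMulVec B K))ᵀ) + q • P)).PosDef := by
  set c := ∑ i, ∑ k, |Q i k|
  have hc : 0 ≤ c := by positivity
  have hB : (vecMulVec B B).PosSemidef := by simpa using posSemidef_vecMulVec_self_star B
  have hA := posDef_add_smul_one_add_transpose (Q := Q) (r := 2 * q + c) (by linarith)
  obtain ⟨W, hWh, hW⟩ := exists_isHermitian_mul_add_mul_transpose_eq hA hB.isHermitian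
  have hWpd : W.PosDef :=
    (posSemidef_of_posSemidef_mul_add_mul_transpose hA hWh (hW ▸ hB)).posDef_of_controllable
      hctrb hW
  refine ⟨W⁻¹, -(1 / 2 : ℝ) • (W⁻¹ *ᵥ B), hWpd.inv, ?_⟩
  rw [neg_sym_mul_closedLoop_add_smul_eq hWpd.inv.isHermitian.transpose_eq
    (inv_mul_add_transpose_mul_inv_eq hWpd hW)]
  exact hWpd.inv.smul (by linarith)
end
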